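/- Assume the CFL condition. Then for every j = 0, …, N, the grid scheme satisfies sup_{α∈ℤ^d} |U^j_α| ≤ ‖u₀‖_{L^∞(ℝ^d)} + t_j ‖f‖_{L^∞(ℝ^d)}. -/

import Mathlib

open scoped BigOperators

/-- `J_p(ξ) = |ξ|^{p-2} ξ`. -/
noncomputable def Jp (p ξ : ℝ) : ℝ := |ξ| ^ (p - 2) * ξ

/-- The grid point `y_β = h β ∈ ℝ^d` for `β ∈ ℤ^d`. -/
noncomputable def ygrid (d : ℕ) (h : ℝ) (β : Fin d → ℤ) : EuclideanSpace ℝ (Fin d) :=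
  (WithLp.equiv 2 (Fin d → ℝ)).symm (fun i => h * (β i : ℝ))

/-- The discrete `p`-Laplacian `D_p^h ψ(x) = Σ_β J_p(ψ(x+y_β) - ψ(x)) ω_β`. -/
noncomputable def Dph (d : ℕ) (p h : ℝ) (ω : (Fin d → ℤ) → ℝ)
    (ψ : EuclideanSpace ℝ (Fin d) → ℝ) (x : EuclideanSpace ℝ (Fin d)) : ℝ :=
  ∑ᶠ β, Jp p (ψ (x + ygrid d h β) - ψ x) * ω β

/-!
By induction on `j`, `U^j` is bounded by `‖u₀‖_∞ + t_j ‖f‖_∞` and `a`-Hölder with constant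
`Lu + t_j Lf`. The Hölder bound keeps the increments of `U^j` over the stencil `|y_β| < r` in
`[-K, K]` with `K = (Lu + t_j Lf) r^a`, where `J_p` is `(p-1)K^{p-2}`-Lipschitz, and the CFL
condition then makes the explicit step monotone. Comparing `U^j` with the zero function and with
its own translate gives the two bounds for `U^{j+1}`.
-/

open Function

lemma rpow_sub_rpow_le_mul {q K u v : ℝ} (hq : 1 ≤ q) (hv : 0 ≤ v) (hvu : v ≤ u) (huK : u ≤ K) :
    u ^ q - v ^ q ≤ q * K ^ (q - 1) * (u - v) := by
  rcases hvu.eq_or_lt with rfl | hlt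
  · simp
  have hu : 0 ≤ u := hv.trans hlt.le
  have hslope := (convexOn_rpow hq).slope_le_of_hasDerivAt hv hu hlt
    (Real.hasDerivAt_rpow_const (Or.inr hq))
  rw [slope_def_field, div_le_iff₀ (sub_pos.2 hlt)] at hslope
  have hKu : u ^ (q - 1) ≤ K ^ (q - 1) := Real.rpow_le_rpow hu huK (by linarith)
  nlinarith [mul_le_mul_of_nonneg_right hKu (sub_pos.2 hlt).le]

lemma Jp_zero (p : ℝ) : Jp p 0 = 0 := by simp [Jp]

lemma Jp_neg (p ξ : ℝ) : Jp p (-ξ) = -Jp p ξ := by simp [Jp]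

lemma Jp_of_nonneg {p ξ : ℝ} (hp : 1 < p) (hξ : 0 ≤ ξ) : Jp p ξ = ξ ^ (p - 1) := by
  rw [Jp, abs_of_nonneg hξ, ← Real.rpow_add_one' hξ (by linarith)]
  ring_nf

lemma Jp_monotone {p : ℝ} (hp : 1 < p) : Monotone (Jp p) :=
  monotone_of_odd_of_monotoneOn_nonneg (Jp_neg p) fun u hu v hv huv => by
    rw [Jp_of_nonneg hp hu, Jp_of_nonneg hp hv]
    exact Real.rpow_le_rpow hu huv (by linarith)

lemma Jp_sub_Jp_le {p K u v : ℝ} (hp : 2 ≤ p) (hvu : v ≤ u) (hu : |u| ≤ K) (hv : |v| ≤ K) :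
    Jp p u - Jp p v ≤ (p - 1) * K ^ (p - 2) * (u - v) := by
  have hnonneg : ∀ {s t : ℝ}, 0 ≤ t → t ≤ s → s ≤ K →
      Jp p s - Jp p t ≤ (p - 1) * K ^ (p - 2) * (s - t) := fun ht hts hsK => by
    rw [Jp_of_nonneg (by linarith) ht, Jp_of_nonneg (by linarith) (ht.trans hts),
      show p - 2 = p - 1 - 1 by ring]
    exact rpow_sub_rpow_le_mul (by linarith) ht hts hsK
  obtain ⟨hvK, hKv⟩ := abs_le.1 hv
  obtain ⟨huK, hKu⟩ := abs_le.1 hu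
  rcases le_total 0 v with h0v | hv0
  · exact hnonneg h0v hvu hKu
  rcases le_total 0 u with h0u | hu0
  · have hpos := hnonneg le_rfl h0u hKu
    have hneg := hnonneg le_rfl (neg_nonneg.2 hv0) (by linarith : -v ≤ K)
    rw [Jp_neg, Jp_zero] at hneg
    rw [Jp_zero] at hpos
    linarith
  · have h := hnonneg (neg_nonneg.2 hu0) (neg_le_neg hvu) (by linarith : -v ≤ K)
    rw [Jp_neg, Jp_neg] at h
    linarith

lemma Jp_sub_Jp_le_of_sub_le {p K A B c : ℝ} (hp : 2 ≤ p) (hA : |A| ≤ K) (hB : |B| ≤ K)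
    (hc : 0 ≤ c) (hAB : A - B ≤ c) : Jp p A - Jp p B ≤ (p - 1) * K ^ (p - 2) * c := by
  have hK : 0 ≤ K := (abs_nonneg A).trans hA
  have hL : 0 ≤ (p - 1) * K ^ (p - 2) := mul_nonneg (by linarith) (Real.rpow_nonneg hK _)
  rcases le_total A B with hle | hle
  · have := Jp_monotone (by linarith : 1 < p) hle
    nlinarith
  · exact (Jp_sub_Jp_le hp hle hA hB).trans (mul_le_mul_of_nonneg_left hAB hL)

lemma finite_setOf_norm_ygrid_lt {d : ℕ} {h : ℝ} (hh : 0 < h) (r : ℝ) :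
    {β : Fin d → ℤ | ‖ygrid d h β‖ < r}.Finite := by
  refine (Set.Finite.pi' fun _ => Set.finite_Icc (-⌈r / h⌉) ⌈r / h⌉).subset fun β hβ i => ?_
  have hcoord : h * |(β i : ℝ)| < r := by
    have := (PiLp.norm_apply_le (ygrid d h β) i).trans_lt hβ
    simpa [ygrid, abs_mul, abs_of_pos hh] using this
  have : |β i| ≤ ⌈r / h⌉ := by
    have : (|β i| : ℝ) ≤ ⌈r / h⌉ :=
      (le_div_iff₀' hh |>.2 hcoord.le).trans (Int.le_ceil _)
    exact_mod_cast this
  exact abs_le.1 this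

lemma nonneg_of_abs_sub_le_mul_rpow {E : Type*} [NormedAddCommGroup E] [Nontrivial E]
    {g : E → ℝ} {L a : ℝ} (hg : ∀ x y, |g x - g y| ≤ L * ‖x - y‖ ^ a) : 0 ≤ L := by
  obtain ⟨z, hz⟩ := exists_ne (0 : E)
  have hpos : 0 < ‖z‖ ^ a := Real.rpow_pos_of_pos (norm_pos_iff.2 hz) a
  have := (abs_nonneg _).trans (hg z 0)
  rw [sub_zero] at this
  exact nonneg_of_mul_nonneg_left this hpos

lemma cfl_mul_le_one {p r τ M a L L' S : ℝ} (hp : 2 ≤ p) (hr : 0 < r) (hτ : 0 ≤ τ) (hM : 0 ≤ M)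
    (hL : 0 ≤ L) (hLL' : L ≤ L') (hS : S ≤ M * r ^ (-p))
    (hCFL : τ * (p - 1) * M * L' ^ (p - 2) ≤ r ^ (2 + (1 - a) * (p - 2))) :
    τ * ((p - 1) * (L * r ^ a) ^ (p - 2) * S) ≤ 1 := by
  have hp1 : 0 ≤ p - 1 := by linarith
  calc τ * ((p - 1) * (L * r ^ a) ^ (p - 2) * S)
      ≤ τ * ((p - 1) * (L * r ^ a) ^ (p - 2) * (M * r ^ (-p))) := by gcongr
    _ = τ * (p - 1) * M * L ^ (p - 2) * (r ^ (a * (p - 2)) * r ^ (-p)) := by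
      rw [Real.mul_rpow hL (by positivity), ← Real.rpow_mul hr.le]; ring
    _ ≤ τ * (p - 1) * M * L' ^ (p - 2) * (r ^ (a * (p - 2)) * r ^ (-p)) := by
      gcongr
    _ ≤ r ^ (2 + (1 - a) * (p - 2)) * (r ^ (a * (p - 2)) * r ^ (-p)) := by gcongr
    _ = 1 := by
      rw [← Real.rpow_add hr, ← Real.rpow_add hr]
      convert Real.rpow_zero r using 2
      ring

noncomputable def eulerStep (d : ℕ) (p h : ℝ) (ω : (Fin d → ℤ) → ℝ) (τ : ℝ)
    (f ψ : EuclideanSpace ℝ (Fin d) → ℝ) (x : EuclideanSpace ℝ (Fin d)) : ℝ :=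
  ψ x + τ * (Dph d p h ω ψ x + f x)

section Scheme

variable {d : ℕ} {p h : ℝ} {ω : (Fin d → ℤ) → ℝ}

lemma Dph_eq_sum (hω : (support ω).Finite) (ψ : EuclideanSpace ℝ (Fin d) → ℝ)
    (x : EuclideanSpace ℝ (Fin d)) :
    Dph d p h ω ψ x = ∑ β ∈ hω.toFinset, Jp p (ψ (x + ygrid d h β) - ψ x) * ω β :=
  finsum_eq_finsetSum_of_support_subset _ fun _ hβ => by
    simpa using right_ne_zero_of_mul hβ

lemma Dph_const (c : ℝ) (x : EuclideanSpace ℝ (Fin d)) : Dph d p h ω (fun _ => c) x = 0 := by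
  simp [Dph, Jp_zero]

lemma abs_add_ygrid_sub_le {r a L : ℝ} {ψ : EuclideanSpace ℝ (Fin d) → ℝ}
    (hzero : ∀ β, r ≤ ‖ygrid d h β‖ → ω β = 0) (ha : 0 ≤ a) (hL : 0 ≤ L)
    (hψ : ∀ x y, |ψ x - ψ y| ≤ L * ‖x - y‖ ^ a) (x : EuclideanSpace ℝ (Fin d))
    (β : Fin d → ℤ) (hβ : ω β ≠ 0) : |ψ (x + ygrid d h β) - ψ x| ≤ L * r ^ a := by
  have hlt : ‖ygrid d h β‖ < r := not_le.1 (mt (hzero β) hβ)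
  refine (hψ _ _).trans ?_
  rw [add_sub_cancel_left]
  exact mul_le_mul_of_nonneg_left (Real.rpow_le_rpow (norm_nonneg _) hlt.le ha) hL

variable {τ K : ℝ}

/-- Local comparison principle: the bound on `τ` makes `ψ(x) + τ D_p^h ψ(x)` nondecreasing in
`ψ(x)` as well as in the values `ψ(x + y_β)`, because `J_p` is `(p-1)K^{p-2}`-Lipschitz on
`[-K, K]`. -/
theorem add_Dph_sub_add_Dph_le (hp : 2 ≤ p) (hω : (support ω).Finite) (hnn : ∀ β, 0 ≤ ω β)
    (hτ : 0 ≤ τ) (hcfl : τ * ((p - 1) * K ^ (p - 2) * ∑ᶠ β, ω β) ≤ 1)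
    {ψ φ : EuclideanSpace ℝ (Fin d) → ℝ} {x x' : EuclideanSpace ℝ (Fin d)} {c : ℝ}
    (hψ : ∀ β, ω β ≠ 0 → |ψ (x + ygrid d h β) - ψ x| ≤ K)
    (hφ : ∀ β, ω β ≠ 0 → |φ (x' + ygrid d h β) - φ x'| ≤ K)
    (hc : ψ x - φ x' ≤ c)
    (hshift : ∀ β, ω β ≠ 0 → ψ (x + ygrid d h β) - φ (x' + ygrid d h β) ≤ c) :
    ψ x + τ * Dph d p h ω ψ x - (φ x' + τ * Dph d p h ω φ x') ≤ c := by
  set δ := c - (ψ x - φ x')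
  have hδ : 0 ≤ δ := sub_nonneg.2 hc
  have hterm : ∀ β ∈ hω.toFinset,
      (Jp p (ψ (x + ygrid d h β) - ψ x) - Jp p (φ (x' + ygrid d h β) - φ x')) * ω β ≤
        (p - 1) * K ^ (p - 2) * δ * ω β := fun β hβ => by
    have hβ : ω β ≠ 0 := by simpa using hβ
    refine mul_le_mul_of_nonneg_right (Jp_sub_Jp_le_of_sub_le hp (hψ β hβ) (hφ β hβ) hδ ?_)
      (hnn β)
    linarith [hshift β hβ]
  have hD : Dph d p h ω ψ x - Dph d p h ω φ x' ≤ (p - 1) * K ^ (p - 2) * δ * ∑ᶠ β, ω β := by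
    rw [Dph_eq_sum hω, Dph_eq_sum hω, finsum_eq_sum ω hω, Finset.mul_sum,
      ← Finset.sum_sub_distrib]
    exact Finset.sum_le_sum fun β hβ => by rw [← sub_mul]; exact hterm β hβ
  have hτD : τ * (Dph d p h ω ψ x - Dph d p h ω φ x') ≤ δ :=
    calc τ * (Dph d p h ω ψ x - Dph d p h ω φ x')
        ≤ τ * ((p - 1) * K ^ (p - 2) * δ * ∑ᶠ β, ω β) := mul_le_mul_of_nonneg_left hD hτ
      _ = δ * (τ * ((p - 1) * K ^ (p - 2) * ∑ᶠ β, ω β)) := by ring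
      _ ≤ δ := mul_le_of_le_one_right hδ hcfl
  linarith

theorem abs_eulerStep_le (hp : 2 ≤ p) (hω : (support ω).Finite) (hnn : ∀ β, 0 ≤ ω β)
    (hτ : 0 ≤ τ) (hcfl : τ * ((p - 1) * K ^ (p - 2) * ∑ᶠ β, ω β) ≤ 1)
    {f ψ : EuclideanSpace ℝ (Fin d) → ℝ} {B F : ℝ}
    (hincr : ∀ x β, ω β ≠ 0 → |ψ (x + ygrid d h β) - ψ x| ≤ K)
    (hψ : ∀ x, |ψ x| ≤ B) (hf : ∀ x, |f x| ≤ F) (x : EuclideanSpace ℝ (Fin d)) :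
    |eulerStep d p h ω τ f ψ x| ≤ B + τ * F := by
  have hincr0 : ∀ x β, ω β ≠ 0 →
      |(fun _ => (0 : ℝ)) (x + ygrid d h β) - (fun _ => (0 : ℝ)) x| ≤ K :=
    fun x β hβ => by simpa using (abs_nonneg _).trans (hincr x β hβ)
  have hup := add_Dph_sub_add_Dph_le (φ := fun _ => 0) (x' := x) (c := B) hp hω hnn hτ hcfl
    (hincr x) (hincr0 x)
    (by simpa using (abs_le.1 (hψ x)).2) fun β _ => by simpa using (abs_le.1 (hψ _)).2
  have hlo := add_Dph_sub_add_Dph_le (ψ := fun _ => 0) (x := x) (c := B) hp hω hnn hτ hcfl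
    (hincr0 x) (hincr x)
    (by simpa using neg_le.1 (abs_le.1 (hψ x)).1)
    fun β _ => by simpa using neg_le.1 (abs_le.1 (hψ _)).1
  simp only [Dph_const] at hup hlo
  have hfx := abs_le.1 (hf x)
  have := mul_le_mul_of_nonneg_left hfx.1 hτ
  have := mul_le_mul_of_nonneg_left hfx.2 hτ
  rw [eulerStep, abs_le]
  constructor <;> linarith

theorem abs_eulerStep_sub_eulerStep_le (hp : 2 ≤ p) (hω : (support ω).Finite)
    (hnn : ∀ β, 0 ≤ ω β) (hτ : 0 ≤ τ) (hcfl : τ * ((p - 1) * K ^ (p - 2) * ∑ᶠ β, ω β) ≤ 1)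
    {f ψ : EuclideanSpace ℝ (Fin d) → ℝ} {a L Lf : ℝ}
    (hincr : ∀ x β, ω β ≠ 0 → |ψ (x + ygrid d h β) - ψ x| ≤ K)
    (hψ : ∀ x y, |ψ x - ψ y| ≤ L * ‖x - y‖ ^ a) (hf : ∀ x y, |f x - f y| ≤ Lf * ‖x - y‖ ^ a)
    (x y : EuclideanSpace ℝ (Fin d)) :
    |eulerStep d p h ω τ f ψ x - eulerStep d p h ω τ f ψ y| ≤ (L + τ * Lf) * ‖x - y‖ ^ a := by
  have hcompare : ∀ x y, ψ x + τ * Dph d p h ω ψ x - (ψ y + τ * Dph d p h ω ψ y) ≤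
      L * ‖x - y‖ ^ a := fun x y =>
    add_Dph_sub_add_Dph_le hp hω hnn hτ hcfl (hincr x) (hincr y) (le_of_abs_le (hψ x y))
      fun β _ => by simpa using le_of_abs_le (hψ (x + ygrid d h β) (y + ygrid d h β))
  have hxy := hcompare x y
  have hyx := hcompare y x
  rw [norm_sub_rev] at hyx
  have := mul_le_mul_of_nonneg_left (abs_le.1 (hf x y)).1 hτ
  have := mul_le_mul_of_nonneg_left (abs_le.1 (hf x y)).2 hτ
  rw [eulerStep, eulerStep, abs_le]
  constructor <;> linarith

end Scheme

theorem scheme_sup_bound_general (d : ℕ) (hd : 1 ≤ d) (p : ℝ) (hp : 2 ≤ p)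
    (h r τ : ℝ) (hh : 0 < h) (hr : 0 < r) (hτ : 0 < τ) (N : ℕ) (M : ℝ) (hM : 0 < M)
    (ω : (Fin d → ℤ) → ℝ) (hnn : ∀ β, 0 ≤ ω β)
    (hzero : ∀ β, r ≤ ‖ygrid d h β‖ → ω β = 0)
    (hsum : ∑ᶠ β, ω β ≤ M * r ^ (-p))
    (a Lu Lf : ℝ) (ha0 : 0 < a)
    (u₀ f : EuclideanSpace ℝ (Fin d) → ℝ)
    (hu₀b : BddAbove (Set.range fun x => |u₀ x|))
    (hfb : BddAbove (Set.range fun x => |f x|))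
    (hu₀ : ∀ x y, |u₀ x - u₀ y| ≤ Lu * ‖x - y‖ ^ a)
    (hf : ∀ x y, |f x - f y| ≤ Lf * ‖x - y‖ ^ a)
    (U : ℕ → EuclideanSpace ℝ (Fin d) → ℝ)
    (hU0 : ∀ x, U 0 x = u₀ x)
    (hUrec : ∀ j x, U (j + 1) x = U j x + τ * (Dph d p h ω (U j) x + f x))
    (hCFL : τ * (p - 1) * M * (Lu + (N : ℝ) * τ * Lf) ^ (p - 2) ≤
      r ^ (2 + (1 - a) * (p - 2))) :
    ∀ j ≤ N, ∀ α : Fin d → ℤ,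
      |U j (ygrid d h α)| ≤ (⨆ x, |u₀ x|) + (j : ℝ) * τ * ⨆ x, |f x| := by
  have : Nonempty (Fin d) := ⟨⟨0, hd⟩⟩
  have hLu : 0 ≤ Lu := nonneg_of_abs_sub_le_mul_rpow hu₀
  have hLf : 0 ≤ Lf := nonneg_of_abs_sub_le_mul_rpow hf
  have hω : (support ω).Finite :=
    (finite_setOf_norm_ygrid_lt hh r).subset fun β hβ => not_le.1 (mt (hzero β) hβ)
  suffices H : ∀ j ≤ N, (∀ x, |U j x| ≤ (⨆ x, |u₀ x|) + j * τ * ⨆ x, |f x|) ∧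
      ∀ x y, |U j x - U j y| ≤ (Lu + j * τ * Lf) * ‖x - y‖ ^ a from
    fun j hj α => (H j hj).1 _
  intro j
  induction j with
  | zero => simpa [hU0] using ⟨fun x => le_ciSup hu₀b x, hu₀⟩
  | succ j ih =>
    intro hj
    obtain ⟨hbound, hholder⟩ := ih (by omega)
    have hL : 0 ≤ Lu + j * τ * Lf := by positivity
    have hcfl := cfl_mul_le_one hp hr hτ.le hM.le hL
      (by gcongr; exact_mod_cast (by omega : j ≤ N)) hsum hCFL
    have hincr := abs_add_ygrid_sub_le hzero ha0.le hL hholder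
    have hstep : U (j + 1) = eulerStep d p h ω τ f (U j) := funext (hUrec j)
    refine ⟨fun x => ?_, fun x y => ?_⟩
    · have := abs_eulerStep_le hp hω hnn hτ.le hcfl hincr hbound (le_ciSup hfb) x
      rw [hstep]; push_cast; linarith
    · have := abs_eulerStep_sub_eulerStep_le hp hω hnn hτ.le hcfl hincr hholder hf x y
      rw [hstep]; push_cast; linarith

/-- Stability in the maximum norm (Proposition 3.4). -/
theorem scheme_sup_bound (d : ℕ) (hd : 1 ≤ d) (p : ℝ) (hp : 2 ≤ p)
    (h r τ : ℝ) (hh : 0 < h) (hr : 0 < r) (hτ : 0 < τ) (N : ℕ) (M : ℝ) (hM : 0 < M)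
    (ω : (Fin d → ℤ) → ℝ) (hsym : ∀ β, ω (-β) = ω β) (hnn : ∀ β, 0 ≤ ω β)
    (hzero : ∀ β, r ≤ ‖ygrid d h β‖ → ω β = 0)
    (hsum : ∑ᶠ β, ω β ≤ M * r ^ (-p))
    (a Lu Lf : ℝ) (ha0 : 0 < a) (ha1 : a ≤ 1)
    (u₀ f : EuclideanSpace ℝ (Fin d) → ℝ)
    (hu₀b : BddAbove (Set.range fun x => |u₀ x|))
    (hfb : BddAbove (Set.range fun x => |f x|))
    (hu₀ : ∀ x y, |u₀ x - u₀ y| ≤ Lu * ‖x - y‖ ^ a)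
    (hf : ∀ x y, |f x - f y| ≤ Lf * ‖x - y‖ ^ a)
    (U : ℕ → EuclideanSpace ℝ (Fin d) → ℝ)
    (hU0 : ∀ x, U 0 x = u₀ x)
    (hUrec : ∀ j x, U (j + 1) x = U j x + τ * (Dph d p h ω (U j) x + f x))
    (hCFL : τ * (p - 1) * M * (Lu + (N : ℝ) * τ * Lf) ^ (p - 2) ≤
      r ^ (2 + (1 - a) * (p - 2))) :
    ∀ j ≤ N, ∀ α : Fin d → ℤ,
      |U j (ygrid d h α)| ≤ (⨆ x, |u₀ x|) + (j : ℝ) * τ * ⨆ x, |f x| :=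
  scheme_sup_bound_general d hd p hp h r τ hh hr hτ N M hM ω hnn hzero hsum a Lu Lf ha0 u₀ f hu₀b
    hfb hu₀ hf U hU0 hUrec hCFL
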